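/- arXiv:1309.1771 — 2 statements merged into one kernel-verified Lean document; each statement's English description precedes it below -/
import Mathlib

section
/- Let C_{α,β} be a connected 1-dimensional simplicial even walk and let G be the simple graph whose edges are the facets occurring in C_{α,β}. Then every vertex of G has degree at least 2. -/
/-!
If a vertex `v` of a two-element facet `e_i` of the `α`-side had `deg_α v > deg_β v`, then the
walk condition for `i` and each `j ∈ supp β` would produce a vertex of `e_i \ e_j` other than `v`,
i.e. the other endpoint `w` of `e_i`, with `deg_α w ≤ deg_β w`. So `w` lies in no `β`-facet, whence
`deg_β w = 0 < deg_α w`, a contradiction. Hence every vertex of an `α`-facet also lies in a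
`β`-facet and symmetrically; as the supports are disjoint, these are two different edges of `G`.
-/

open Finset

/-- The `α`-degree of a vertex `x`. -/
def walkDeg {V : Type*} [DecidableEq V] {q s : ℕ} (F : Fin q → Finset V)
    (α : Fin s → Fin q) (x : V) : ℕ :=
  (Finset.univ.filter fun t : Fin s => x ∈ F (α t)).card

/-- Simplicial even walk `C_{α,β}`. -/
def IsEvenWalk {V : Type*} [DecidableEq V] {q s : ℕ} (F : Fin q → Finset V)
    (α β : Fin s → Fin q) : Prop :=
  2 ≤ s ∧ Disjoint (Set.range α) (Set.range β) ∧
    ∀ i ∈ Set.range α, ∀ j ∈ Set.range β,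
      ¬ (↑(F i \ F j) ⊆ {x : V | walkDeg F β x < walkDeg F α x}) ∧
      ¬ (↑(F j \ F i) ⊆ {x : V | walkDeg F α x < walkDeg F β x})

/-- The vertex set of the even walk `C_{α,β}`. -/
def walkVerts {V : Type*} [DecidableEq V] {q s : ℕ} (F : Fin q → Finset V)
    (α β : Fin s → Fin q) : Finset V :=
  Finset.univ.biUnion fun t : Fin s => F (α t) ∪ F (β t)

/-- Two vertices are adjacent in (the graph formed by the facets of) `C_{α,β}`. -/
def walkAdj {V : Type*} [DecidableEq V] {q s : ℕ} (F : Fin q → Finset V)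
    (α β : Fin s → Fin q) (u v : V) : Prop :=
  u ≠ v ∧ ∃ t : Fin s,
    (u ∈ F (α t) ∧ v ∈ F (α t)) ∨ (u ∈ F (β t) ∧ v ∈ F (β t))

/-- The set of (distinct) facets occurring in `C_{α,β}`: the edge set of the
graph `G` formed by the walk. -/
def walkEdges {V : Type*} [DecidableEq V] {q s : ℕ} (F : Fin q → Finset V)
    (α β : Fin s → Fin q) : Finset (Finset V) :=
  (Finset.univ.image fun t : Fin s => F (α t)) ∪
    (Finset.univ.image fun t : Fin s => F (β t))

lemma walkDeg_pos_iff {V : Type*} [DecidableEq V] {q s : ℕ} (F : Fin q → Finset V)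
    (α : Fin s → Fin q) (x : V) : 0 < walkDeg F α x ↔ ∃ t, x ∈ F (α t) := by
  simp [walkDeg, Finset.card_pos, Finset.filter_nonempty_iff]

namespace IsEvenWalk

variable {V : Type*} [DecidableEq V] {q s : ℕ} {F : Fin q → Finset V} {α β : Fin s → Fin q}

lemma symm (h : IsEvenWalk F α β) : IsEvenWalk F β α :=
  ⟨h.1, h.2.1.symm, fun j hj i hi => (h.2.2 i hi j hj).symm⟩

lemma walkDeg_le_of_mem (h : IsEvenWalk F α β) (hcard : ∀ i, (F i).card = 2) {t : Fin s}
    {v : V} (hv : v ∈ F (α t)) : walkDeg F α v ≤ walkDeg F β v := by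
  by_contra! hlt
  obtain ⟨w, hw⟩ : ∃ w, (F (α t)).erase v = {w} := by
    rw [← Finset.card_eq_one, Finset.card_erase_of_mem hv, hcard]
  have hw_mem : w ∈ F (α t) := Finset.mem_of_mem_erase (hw ▸ Finset.mem_singleton_self w)
  have hw_spec : ∀ t', w ∉ F (β t') ∧ walkDeg F α w ≤ walkDeg F β w := by
    intro t'
    obtain ⟨z, hz, hz_deg⟩ := Set.not_subset.mp (h.2.2 _ ⟨t, rfl⟩ _ ⟨t', rfl⟩).1
    obtain ⟨hz_mem, hz_not⟩ := Finset.mem_sdiff.mp (Finset.mem_coe.mp hz)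
    have hzv : z ≠ v := by
      rintro rfl
      exact hz_deg hlt
    obtain rfl : z = w := Finset.mem_singleton.mp (hw ▸ Finset.mem_erase.mpr ⟨hzv, hz_mem⟩)
    exact ⟨hz_not, not_lt.mp hz_deg⟩
  have hβ_pos : 0 < walkDeg F β w :=
    ((walkDeg_pos_iff F α w).mpr ⟨t, hw_mem⟩).trans_le (hw_spec t).2
  obtain ⟨t', ht'⟩ := (walkDeg_pos_iff F β w).mp hβ_pos
  exact (hw_spec t').1 ht'

lemma exists_mem_right_of_mem_left (h : IsEvenWalk F α β) (hcard : ∀ i, (F i).card = 2)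
    {t : Fin s} {v : V} (hv : v ∈ F (α t)) : ∃ t', v ∈ F (β t') :=
  (walkDeg_pos_iff F β v).mp <|
    ((walkDeg_pos_iff F α v).mpr ⟨t, hv⟩).trans_le (h.walkDeg_le_of_mem hcard hv)

lemma exists_mem_left_right (h : IsEvenWalk F α β) (hcard : ∀ i, (F i).card = 2) {v : V}
    (hv : v ∈ walkVerts F α β) : ∃ t t', v ∈ F (α t) ∧ v ∈ F (β t') := by
  simp only [walkVerts, Finset.mem_biUnion, Finset.mem_univ, true_and, Finset.mem_union] at hv
  obtain ⟨t, hvα | hvβ⟩ := hv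
  · obtain ⟨t', ht'⟩ := h.exists_mem_right_of_mem_left hcard hvα
    exact ⟨t, t', hvα, ht'⟩
  · obtain ⟨t', ht'⟩ := h.symm.exists_mem_right_of_mem_left hcard hvβ
    exact ⟨t', t, ht', hvβ⟩

end IsEvenWalk

theorem stmt10_general {V : Type*} [DecidableEq V] {q s : ℕ} (e : Fin q → Finset V)
    (hcard : ∀ i, (e i).card = 2) (hinj : Function.Injective e)
    (α β : Fin s → Fin q) (h : IsEvenWalk e α β) :
    ∀ v ∈ walkVerts e α β,
      2 ≤ ((walkEdges e α β).filter fun E => v ∈ E).card := by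
  intro v hv
  obtain ⟨t, t', hvα, hvβ⟩ := h.exists_mem_left_right hcard hv
  have hne : e (α t) ≠ e (β t') := fun heq =>
    Set.disjoint_left.mp h.2.1 ⟨t, rfl⟩ ⟨t', (hinj heq).symm⟩
  refine Finset.one_lt_card.mpr ⟨e (α t), ?_, e (β t'), ?_, hne⟩
  · exact Finset.mem_filter.mpr
      ⟨Finset.mem_union_left _ (Finset.mem_image_of_mem _ (Finset.mem_univ t)), hvα⟩
  · exact Finset.mem_filter.mpr
      ⟨Finset.mem_union_right _ (Finset.mem_image_of_mem _ (Finset.mem_univ t')), hvβ⟩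

theorem stmt10 {V : Type*} [DecidableEq V] {q s : ℕ} (e : Fin q → Finset V)
    (hcard : ∀ i, (e i).card = 2) (hinj : Function.Injective e)
    (α β : Fin s → Fin q) (h : IsEvenWalk e α β)
    (hconn : ∀ u v : V, u ∈ walkVerts e α β → v ∈ walkVerts e α β →
        Relation.ReflTransGen (walkAdj e α β) u v) :
    ∀ v ∈ walkVerts e α β,
      2 ≤ ((walkEdges e α β).filter fun E => v ∈ E).card :=
  stmt10_general e hcard hinj α β h
end

section
/- Let Δ be a simplicial complex and suppose its line graph L(Δ) contains no cycle of even length. Then the facet ideal F(Δ) is of linear type. -/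
open Finset MvPolynomial

/-- Successor modulo `m` on `Fin m`. -/
def cyclicNext {m : ℕ} (i : Fin m) : Fin m := ⟨(i.val + 1) % m, Nat.mod_lt _ i.pos⟩

/-- The facets of a simplicial complex: each is nonempty, and none contains another. -/
def IsFacetFamily {V : Type*} [DecidableEq V] {q : ℕ} (F : Fin q → Finset V) : Prop :=
  (∀ i, (F i).Nonempty) ∧ ∀ i j : Fin q, F i ⊆ F j → i = j

/-- The squarefree monomial `f_i = ∏_{x ∈ F_i} x` of a facet `F_i`. -/
noncomputable def facetMonomial (K : Type*) [Field K] {n q : ℕ}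
    (F : Fin q → Finset (Fin n)) (i : Fin q) : MvPolynomial (Fin n) K :=
  ∏ x ∈ F i, X x

/-- The `R`-algebra map `ψ : S = R[T_1,…,T_q] → R[t]`, `T_i ↦ f_i·t`. -/
noncomputable def reesHom (K : Type*) [Field K] {n q : ℕ} (F : Fin q → Finset (Fin n)) :
    MvPolynomial (Fin q) (MvPolynomial (Fin n) K) →ₐ[MvPolynomial (Fin n) K]
      Polynomial (MvPolynomial (Fin n) K) :=
  aeval fun i : Fin q => Polynomial.C (facetMonomial K F i) * Polynomial.X

/-- The defining ideal `J = ker ψ` of the Rees algebra `R[It]`. -/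
noncomputable def reesIdeal (K : Type*) [Field K] {n q : ℕ} (F : Fin q → Finset (Fin n)) :
    Ideal (MvPolynomial (Fin q) (MvPolynomial (Fin n) K)) :=
  RingHom.ker (reesHom K F)

/-- The ideal generated by the facet monomials is of linear type: its Rees ideal `J`
is generated by its elements that are homogeneous of degree `1` in `T_1,…,T_q`. -/
def IsLinearType (K : Type*) [Field K] {n q : ℕ} (F : Fin q → Finset (Fin n)) : Prop :=
  reesIdeal K F = Ideal.span {g | g ∈ reesIdeal K F ∧ g.IsHomogeneous 1}

/-!
`J` is spanned over `K` by the binomials `T^b x^a - T^b' x^a'` whose two terms have the same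
image `x^μ t^d` under `ψ`. Such a binomial drops to lower `T`-degree after subtracting a multiple
of a linear relation `T_i x^a - T_j x^a''` as soon as some facet `F_j` of `T^b'` is covered by a
facet `F_i` of `T^b` together with the variables of `x^a` (or symmetrically); a common index
`i = j` is the trivial instance. If there is no such pair, then each facet of `T^b` meets, besides
any given facet of `T^b'`, a further facet of `T^b'`, and vice versa. A non-backtracking walk
alternating between the two sides then closes up into an even cycle of `L(Δ)`.
-/

local notation "𝟏[" s "]" => Finsupp.indicator s fun _ _ => (1 : ℕ)

lemma Finsupp.exists_eq_add_single_one {ι : Type*} {b : ι →₀ ℕ} {i : ι} (hi : i ∈ b.support) :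
    ∃ c, b = c + Finsupp.single i 1 :=
  ⟨b - Finsupp.single i 1, (tsub_add_cancel_of_le <| Finsupp.single_le_iff.2 <|
    Nat.one_le_iff_ne_zero.2 <| Finsupp.mem_support_iff.1 hi).symm⟩

lemma Finsupp.indicator_le_add_indicator {σ : Type*} [DecidableEq σ] {s t : Finset σ}
    {a : σ →₀ ℕ} (h : t ⊆ s ∪ a.support) : 𝟏[t] ≤ a + 𝟏[s] := by
  intro x
  have := @h x
  simp only [Finset.mem_union, Finsupp.mem_support_iff] at this
  simp only [Finsupp.indicator_apply, Finsupp.add_apply]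
  split_ifs <;> grind

theorem Submodule.sum_smul_mem_of_sum_fiberwise_eq_zero {R M ι κ : Type*} [Semiring R]
    [AddCommGroup M] [Module R M] [DecidableEq κ] (N : Submodule R M) {s : Finset ι}
    {c : ι → R} {e : ι → M} (w : ι → κ) (hc : ∀ k, ∑ x ∈ s with w x = k, c x = 0)
    (he : ∀ x ∈ s, ∀ y ∈ s, w x = w y → e x - e y ∈ N) : ∑ x ∈ s, c x • e x ∈ N := by
  rw [← Finset.sum_fiberwise_of_maps_to fun x hx => Finset.mem_image_of_mem w hx]
  refine N.sum_mem fun k hk => ?_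
  obtain ⟨x₀, hx₀, rfl⟩ := Finset.mem_image.1 hk
  have hfiber : ∑ x ∈ s with w x = w x₀, c x • e x =
      ∑ x ∈ s with w x = w x₀, c x • (e x - e x₀) := by
    simp_rw [smul_sub, Finset.sum_sub_distrib, ← Finset.sum_smul, hc, zero_smul, sub_zero]
  rw [hfiber]
  refine N.sum_mem fun x hx => N.smul_mem _ ?_
  rw [Finset.mem_filter] at hx
  exact he x hx.1 x₀ hx₀ hx.2

theorem MvPolynomial.eq_sum_sigma_smul_monomial_monomial {σ τ R : Type*} [CommSemiring R]
    (p : MvPolynomial σ (MvPolynomial τ R)) :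
    p = ∑ x ∈ p.support.sigma fun b => (p.coeff b).support,
      (p.coeff x.1).coeff x.2 • monomial x.1 (monomial x.2 1) := by
  rw [Finset.sum_sigma]
  conv_lhs => rw [p.as_sum]
  refine Finset.sum_congr rfl fun b _ => ?_
  conv_lhs => rw [(p.coeff b).as_sum, map_sum]
  refine Finset.sum_congr rfl fun a _ => ?_
  rw [smul_monomial, smul_monomial, smul_eq_mul, mul_one]

theorem Polynomial.coeff_coeff_sum_smul_monomial_monomial {ι σ R : Type*} [CommSemiring R]
    [DecidableEq σ] (s : Finset ι) (c : ι → R) (w : ι → (σ →₀ ℕ) × ℕ) (μ : σ →₀ ℕ) (d : ℕ) :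
    ((∑ x ∈ s, c x • monomial (w x).2 (MvPolynomial.monomial (w x).1 (1 : R))).coeff d).coeff μ =
      ∑ x ∈ s with w x = (μ, d), c x := by
  simp [finsetSum_coeff, MvPolynomial.coeff_sum, coeff_monomial, MvPolynomial.coeff_monomial,
    apply_ite (MvPolynomial.coeff μ), Finset.sum_filter, Prod.ext_iff, ite_and, and_comm]

def HasEvenCycle {ι : Type*} (G : ι → ι → Prop) : Prop :=
  ∃ (m : ℕ) (v : Fin m → ι), 3 ≤ m ∧ Even m ∧ Function.Injective v ∧
    ∀ t : Fin m, v t ≠ v (cyclicNext t) ∧ G (v t) (v (cyclicNext t))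

section EvenCycle

variable {ι : Type*} {G : ι → ι → Prop}

lemma val_cyclicNext {m : ℕ} (t : Fin m) :
    (cyclicNext t).val = if t.val + 1 = m then 0 else t.val + 1 := by
  have := t.isLt
  split_ifs with h
  · simp [cyclicNext, h]
  · exact Nat.mod_eq_of_lt (by omega)

theorem hasEvenCycle_of_nonbacktracking_alternating_walk [Finite ι] {A : Set ι} (V : ℕ → ι)
    (hadj : ∀ u, G (V u) (V (u + 1))) (hback : ∀ u, V u ≠ V (u + 2))
    (halt : ∀ u, V (u + 1) ∈ A ↔ V u ∉ A) : HasEvenCycle G := by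
  classical
  have hrep : ∃ m, 0 < m ∧ ∃ s, V s = V (s + m) := by
    obtain ⟨x, y, hxy, hV⟩ := Finite.exists_ne_map_eq_of_infinite V
    rcases Nat.lt_or_gt_of_ne hxy with h | h
    · exact ⟨y - x, by omega, x, by rwa [Nat.add_sub_cancel' h.le]⟩
    · exact ⟨x - y, by omega, y, by rw [Nat.add_sub_cancel' h.le, hV]⟩
  -- the shortest return of the walk is a cycle
  obtain ⟨m, ⟨hm, s, hs⟩, hmin⟩ : ∃ m, (0 < m ∧ ∃ s, V s = V (s + m)) ∧
      ∀ k, 0 < k → k < m → ∀ s', V s' ≠ V (s' + k) :=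
    ⟨Nat.find hrep, Nat.find_spec hrep, fun k hk hkm s' h => Nat.find_min hrep hkm ⟨hk, s', h⟩⟩
  have hparity (k : ℕ) : V (s + k) ∈ A ↔ (V s ∈ A ↔ Even k) := by
    induction k with
    | zero => simp
    | succ k ih => rw [← add_assoc, halt, ih, Nat.even_add_one]; tauto
  have heven : Even m := by have := hparity m; rw [← hs] at this; tauto
  have hm3 : 3 ≤ m := by
    have hm2 : m ≠ 2 := fun h => hback s (h ▸ hs)
    obtain ⟨k, hk⟩ := heven
    omega
  have hinj : Function.Injective fun r : Fin m => V (s + r) := by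
    intro r₁ r₂ h
    by_contra hne
    rcases Nat.lt_or_gt_of_ne (Fin.val_ne_of_ne hne) with hr | hr
    · exact hmin (r₂ - r₁) (by omega) (by omega) (s + r₁)
        (by rwa [add_assoc, Nat.add_sub_cancel' hr.le])
    · exact hmin (r₁ - r₂) (by omega) (by omega) (s + r₂)
        (by rw [add_assoc, Nat.add_sub_cancel' hr.le]; exact h.symm)
  have hnext (t : Fin m) : V (s + cyclicNext t) = V (s + t + 1) := by
    rw [val_cyclicNext]
    split_ifs with h
    · rw [add_zero, hs, add_assoc, h]
    · rfl
  refine ⟨m, fun r => V (s + r), hm3, heven, hinj, fun t => ⟨fun h => ?_, ?_⟩⟩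
  · have := congrArg Fin.val (hinj h)
    rw [val_cyclicNext] at this
    split_ifs at this <;> omega
  · simp only [hnext]
    exact hadj _

theorem exists_nonbacktracking_alternating_walk {A B : Set ι} (hAB : Disjoint A B) {i₀ j₀ : ι}
    (hi₀ : i₀ ∈ A) (hj₀ : j₀ ∈ B) (hA : ∀ x ∈ A, ∀ p ∈ B, ∃ y ∈ B, y ≠ p ∧ G x y)
    (hB : ∀ x ∈ B, ∀ p ∈ A, ∃ y ∈ A, y ≠ p ∧ G x y) :
    ∃ V : ℕ → ι, (∀ u, G (V u) (V (u + 1))) ∧ (∀ u, V u ≠ V (u + 2)) ∧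
      ∀ u, V (u + 1) ∈ A ↔ V u ∉ A := by
  classical
  choose! nextA hnextA using hA
  choose! nextB hnextB using hB
  -- a state is a pair (previous vertex, current vertex)
  let step : ι × ι → ι × ι := fun e => (e.2, if e.2 ∈ A then nextA e.2 e.1 else nextB e.2 e.1)
  let Inv : ι × ι → Prop := fun e => G e.1 e.2 ∧ (e.1 ∈ A ∧ e.2 ∈ B ∨ e.1 ∈ B ∧ e.2 ∈ A)
  have hstep : ∀ e, Inv e → Inv (step e) ∧ (step e).2 ≠ e.1 := by
    rintro ⟨p, x⟩ ⟨-, ⟨hp, hx⟩ | ⟨hp, hx⟩⟩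
    · obtain ⟨hy, hne, hG⟩ := hnextB x hx p hp
      simp only [step, Inv, if_neg (Set.disjoint_right.1 hAB hx)]
      exact ⟨⟨hG, Or.inr ⟨hx, hy⟩⟩, hne⟩
    · obtain ⟨hy, hne, hG⟩ := hnextA x hx p hp
      simp only [step, Inv, if_pos hx]
      exact ⟨⟨hG, Or.inl ⟨hx, hy⟩⟩, hne⟩
  let e : ℕ → ι × ι := fun u => step^[u] (i₀, nextA i₀ j₀)
  have he (u : ℕ) : e (u + 1) = step (e u) := Function.iterate_succ_apply' step u _
  have hinv (u : ℕ) : Inv (e u) := by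
    induction u with
    | zero =>
      obtain ⟨hy, -, hG⟩ := hnextA i₀ hi₀ j₀ hj₀
      exact ⟨hG, Or.inl ⟨hi₀, hy⟩⟩
    | succ u ih => rw [he]; exact (hstep _ ih).1
  refine ⟨fun u => (e u).1, fun u => ?_, fun u => ?_, fun u => ?_⟩
  · simp only [he]; exact (hinv u).1
  · simp only [he]; exact (hstep _ (hinv u)).2.symm
  · simp only [he]
    rcases (hinv u).2 with ⟨h₁, h₂⟩ | ⟨h₁, h₂⟩
    · exact ⟨fun h => absurd h₂ (Set.disjoint_left.1 hAB h), fun h => absurd h₁ h⟩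
    · exact iff_of_true h₂ (Set.disjoint_right.1 hAB h₁)

theorem hasEvenCycle_of_forall_exists_ne_adj [Finite ι] {A B : Set ι} (hAB : Disjoint A B)
    (hAne : A.Nonempty) (hBne : B.Nonempty) (hA : ∀ x ∈ A, ∀ p ∈ B, ∃ y ∈ B, y ≠ p ∧ G x y)
    (hB : ∀ x ∈ B, ∀ p ∈ A, ∃ y ∈ A, y ≠ p ∧ G x y) : HasEvenCycle G := by
  obtain ⟨i₀, hi₀⟩ := hAne
  obtain ⟨j₀, hj₀⟩ := hBne
  obtain ⟨V, hadj, hback, halt⟩ := exists_nonbacktracking_alternating_walk hAB hi₀ hj₀ hA hB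
  exact hasEvenCycle_of_nonbacktracking_alternating_walk V hadj hback halt

end EvenCycle

section FacetExponent

variable {ι σ : Type*} (F : ι → Finset σ)

noncomputable def facetExponent : (ι →₀ ℕ) →ₗ[ℕ] (σ →₀ ℕ) :=
  Finsupp.linearCombination ℕ fun i => 𝟏[F i]

variable {F}

@[simp]
lemma facetExponent_single (i : ι) : facetExponent F (Finsupp.single i 1) = 𝟏[F i] := by
  rw [facetExponent, Finsupp.linearCombination_single, one_smul]

lemma mem_support_facetExponent {b : ι →₀ ℕ} {x : σ} :
    x ∈ (facetExponent F b).support ↔ ∃ i ∈ b.support, x ∈ F i := by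
  classical
  simp only [facetExponent, Finsupp.linearCombination_apply, Finsupp.sum, Finsupp.mem_support_iff,
    Finsupp.finsetSum_apply, Finsupp.smul_apply, Finsupp.indicator_apply, ne_eq,
    Finset.sum_eq_zero_iff, not_forall]
  simp [and_comm]

variable [DecidableEq σ]

lemma exists_ne_inter_nonempty_of_not_subset {a a' : σ →₀ ℕ} {b b' : ι →₀ ℕ}
    (heq : a + facetExponent F b = a' + facetExponent F b') {i j : ι} (hi : i ∈ b.support)
    (hcov : ¬ F i ⊆ F j ∪ a'.support) : ∃ j' ∈ b'.support, j' ≠ j ∧ (F i ∩ F j').Nonempty := by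
  obtain ⟨y, hyi, hy⟩ := Finset.not_subset.1 hcov
  rw [Finset.mem_union, not_or, Finsupp.notMem_support_iff] at hy
  have hb : y ∈ (facetExponent F b).support := mem_support_facetExponent.2 ⟨i, hi, hyi⟩
  have hb' : y ∈ (facetExponent F b').support := by
    have := congrArg (· y) heq
    simp only [Finsupp.add_apply, hy.2, zero_add] at this
    rw [Finsupp.mem_support_iff] at hb ⊢
    omega
  obtain ⟨j', hj', hyj'⟩ := mem_support_facetExponent.1 hb'
  exact ⟨j', hj', fun h => hy.1 (h ▸ hyj'), y, Finset.mem_inter.2 ⟨hyi, hyj'⟩⟩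

theorem exists_subset_union_support [Finite ι]
    (hF : ¬ HasEvenCycle fun i j => (F i ∩ F j).Nonempty) {a a' : σ →₀ ℕ} {b b' : ι →₀ ℕ}
    (hb : b ≠ 0) (hb' : b' ≠ 0) (heq : a + facetExponent F b = a' + facetExponent F b') :
    (∃ i ∈ b.support, ∃ j ∈ b'.support, F j ⊆ F i ∪ a.support) ∨
      ∃ j ∈ b'.support, ∃ i ∈ b.support, F i ⊆ F j ∪ a'.support := by
  by_contra! h
  refine hF (hasEvenCycle_of_forall_exists_ne_adj (A := b.support) (B := b'.support) ?_
    (Finsupp.support_nonempty_iff.2 hb) (Finsupp.support_nonempty_iff.2 hb')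
    (fun i hi j hj => exists_ne_inter_nonempty_of_not_subset heq hi (h.2 j hj i hi))
    (fun j hj i hi => exists_ne_inter_nonempty_of_not_subset heq.symm hj (h.1 i hi j hj)))
  -- a common index `k` would give the trivial cover `F k ⊆ F k ∪ a.support`
  exact Set.disjoint_left.2 fun k hk hk' => h.1 k hk k hk' Finset.subset_union_left

end FacetExponent

noncomputable def reesWeight {ι σ : Type*} (F : ι → Finset σ) (b : ι →₀ ℕ) (a : σ →₀ ℕ) :
    (σ →₀ ℕ) × ℕ :=
  (a + facetExponent F b, b.degree)

section Rees

variable {K : Type*} [Field K] {n q : ℕ} {F : Fin q → Finset (Fin n)}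

variable (K F) in
noncomputable def linearRelations : Ideal (MvPolynomial (Fin q) (MvPolynomial (Fin n) K)) :=
  Ideal.span {g | g ∈ reesIdeal K F ∧ g.IsHomogeneous 1}

lemma facetMonomial_eq_monomial (i : Fin q) : facetMonomial K F i = monomial 𝟏[F i] 1 := by
  simpa [facetMonomial] using prod_X_pow (R := K) (fun _ => 1) (F i)

lemma reesHom_monomial_one (b : Fin q →₀ ℕ) :
    reesHom K F (monomial b 1) =
      Polynomial.monomial b.degree (monomial (facetExponent F b) 1) := by
  rw [reesHom, aeval_monomial, map_one, one_mul, Finsupp.prod]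
  have hpow (i : Fin q) : (Polynomial.C (facetMonomial K F i) * Polynomial.X) ^ b i =
      Polynomial.C (monomial (b i • 𝟏[F i]) 1) * Polynomial.X ^ b i := by
    rw [mul_pow, ← map_pow, facetMonomial_eq_monomial, monomial_pow, one_pow]
  rw [Finset.prod_congr rfl fun i _ => hpow i, Finset.prod_mul_distrib, ← map_prod,
    Finset.prod_pow_eq_pow_sum, ← monomial_sum_one, Polynomial.C_mul_X_pow_eq_monomial]
  rfl

lemma reesHom_monomial_monomial (b : Fin q →₀ ℕ) (a : Fin n →₀ ℕ) :
    reesHom K F (monomial b (monomial a 1)) =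
      Polynomial.monomial (reesWeight F b a).2 (monomial (reesWeight F b a).1 1) := by
  rw [← mul_one (monomial a 1), ← C_mul_monomial, ← algebraMap_eq, map_mul, AlgHom.commutes,
    reesHom_monomial_one, Polynomial.algebraMap_eq, Polynomial.C_mul_monomial, monomial_mul,
    mul_one]
  rfl

lemma reesWeight_add_single (c : Fin q →₀ ℕ) (a : Fin n →₀ ℕ) (i : Fin q) :
    reesWeight F (c + Finsupp.single i 1) a = (a + 𝟏[F i] + facetExponent F c, c.degree + 1) := by
  simp only [reesWeight, map_add, facetExponent_single, Finsupp.degree_single]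
  ext1 <;> simp only [add_comm, add_left_comm]

lemma monomial_sub_monomial_mem_reesIdeal {b b' : Fin q →₀ ℕ} {a a' : Fin n →₀ ℕ}
    (h : reesWeight F b a = reesWeight F b' a') :
    monomial b (monomial a 1) - monomial b' (monomial a' 1) ∈ reesIdeal K F := by
  rw [reesIdeal, RingHom.mem_ker, map_sub, reesHom_monomial_monomial, reesHom_monomial_monomial,
    h, sub_self]

lemma single_sub_single_mem_linearRelations {i j : Fin q} {a a' : Fin n →₀ ℕ}
    (h : a + 𝟏[F i] = a' + 𝟏[F j]) :
    monomial (Finsupp.single i 1) (monomial a 1) -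
      monomial (Finsupp.single j 1) (monomial a' 1) ∈ linearRelations K F := by
  refine Ideal.subset_span ⟨monomial_sub_monomial_mem_reesIdeal ?_, ?_⟩
  · simp [reesWeight, h]
  · exact (isHomogeneous_monomial _ (Finsupp.degree_single i 1)).sub
      (isHomogeneous_monomial _ (Finsupp.degree_single j 1))

lemma add_single_sub_add_single_mem_linearRelations {c c' : Fin q →₀ ℕ} {a a' a'' : Fin n →₀ ℕ}
    {i j : Fin q} (hij : a + 𝟏[F i] = a'' + 𝟏[F j])
    (hrest : monomial c (monomial a'' 1) - monomial c' (monomial a' 1) ∈ linearRelations K F) :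
    monomial (c + Finsupp.single i 1) (monomial a 1) -
      monomial (c' + Finsupp.single j 1) (monomial a' 1) ∈ linearRelations K F := by
  have hsplit : monomial (c + Finsupp.single i 1) (monomial a (1 : K)) -
      monomial (c' + Finsupp.single j 1) (monomial a' 1) =
      monomial c 1 * (monomial (Finsupp.single i 1) (monomial a 1) -
        monomial (Finsupp.single j 1) (monomial a'' 1)) +
      monomial (Finsupp.single j 1) 1 *
        (monomial c (monomial a'' 1) - monomial c' (monomial a' 1)) := by
    simp only [mul_sub, monomial_mul, one_mul]
    rw [add_comm _ c, add_comm _ c']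
    abel
  rw [hsplit]
  exact add_mem (Ideal.mul_mem_left _ _ (single_sub_single_mem_linearRelations hij))
    (Ideal.mul_mem_left _ _ hrest)

lemma sub_mem_linearRelations_of_subset {d : ℕ}
    (ih : ∀ {b b' : Fin q →₀ ℕ} {a a' : Fin n →₀ ℕ}, reesWeight F b a = reesWeight F b' a' →
      b.degree = d →
        monomial b (monomial a (1 : K)) - monomial b' (monomial a' 1) ∈ linearRelations K F)
    {b b' : Fin q →₀ ℕ} {a a' : Fin n →₀ ℕ} (hd : b.degree = d + 1)
    (h : reesWeight F b a = reesWeight F b' a') {i j : Fin q} (hi : i ∈ b.support)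
    (hj : j ∈ b'.support) (hcov : F j ⊆ F i ∪ a.support) :
    monomial b (monomial a (1 : K)) - monomial b' (monomial a' 1) ∈ linearRelations K F := by
  obtain ⟨c, rfl⟩ := Finsupp.exists_eq_add_single_one hi
  obtain ⟨c', rfl⟩ := Finsupp.exists_eq_add_single_one hj
  set a'' := a + 𝟏[F i] - 𝟏[F j]
  have hij : a + 𝟏[F i] = a'' + 𝟏[F j] :=
    (tsub_add_cancel_of_le (Finsupp.indicator_le_add_indicator hcov)).symm
  rw [reesWeight_add_single, reesWeight_add_single, hij, Prod.mk.injEq, add_right_comm,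
    add_right_comm a', add_left_inj, add_left_inj] at h
  rw [map_add, Finsupp.degree_single, add_left_inj] at hd
  exact add_single_sub_add_single_mem_linearRelations hij (ih (Prod.ext h.1 h.2) hd)

theorem monomial_sub_monomial_mem_linearRelations
    (hF : ¬ HasEvenCycle fun i j => (F i ∩ F j).Nonempty) {b b' : Fin q →₀ ℕ}
    {a a' : Fin n →₀ ℕ} (h : reesWeight F b a = reesWeight F b' a') :
    monomial b (monomial a (1 : K)) - monomial b' (monomial a' 1) ∈ linearRelations K F := by
  obtain ⟨d, hd⟩ : ∃ d, b.degree = d := ⟨_, rfl⟩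
  induction d generalizing b b' a a' with
  | zero =>
    have hd' : b'.degree = 0 := (congrArg Prod.snd h).symm.trans hd
    rw [Finsupp.degree_eq_zero_iff] at hd hd'
    subst hd hd'
    obtain rfl : a = a' := by simpa [reesWeight] using h
    rw [sub_self]
    exact zero_mem _
  | succ d ih =>
    have hd' : b'.degree = d + 1 := (congrArg Prod.snd h).symm.trans hd
    have hne {c : Fin q →₀ ℕ} (hc : c.degree = d + 1) : c ≠ 0 := by
      rintro rfl
      simp at hc
    rcases exists_subset_union_support hF (hne hd) (hne hd') (congrArg Prod.fst h) with
      ⟨i, hi, j, hj, hcov⟩ | ⟨j, hj, i, hi, hcov⟩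
    · exact sub_mem_linearRelations_of_subset ih hd h hi hj hcov
    · rw [← neg_sub]
      exact neg_mem (sub_mem_linearRelations_of_subset ih hd' h.symm hj hi hcov)

end Rees

theorem stmt17_general {K : Type*} [Field K] {n q : ℕ}
    (F : Fin q → Finset (Fin n))
    (hnoevencycle : ¬ ∃ (m : ℕ) (v : Fin m → Fin q), 3 ≤ m ∧ Even m ∧
        Function.Injective v ∧
        ∀ t : Fin m, v t ≠ v (cyclicNext t) ∧
          (F (v t) ∩ F (v (cyclicNext t))).Nonempty) :
    IsLinearType K F := by
  refine le_antisymm (fun p hp => ?_) (Ideal.span_le.2 fun g hg => hg.1)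
  have hp0 : reesHom K F p = 0 := hp
  rw [eq_sum_sigma_smul_monomial_monomial p] at hp0 ⊢
  refine ((linearRelations K F).restrictScalars K).sum_smul_mem_of_sum_fiberwise_eq_zero
    (fun x => reesWeight F x.1 x.2) (fun ⟨μ, d⟩ => ?_)
    fun x _ y _ h => monomial_sub_monomial_mem_linearRelations hnoevencycle h
  simp only [map_sum, AlgHom.map_smul_of_tower, reesHom_monomial_monomial] at hp0
  rw [← Polynomial.coeff_coeff_sum_smul_monomial_monomial, hp0, Polynomial.coeff_zero, coeff_zero]

theorem stmt17 {K : Type*} [Field K] {n q : ℕ}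
    (F : Fin q → Finset (Fin n)) (hF : IsFacetFamily F)
    (hnoevencycle : ¬ ∃ (m : ℕ) (v : Fin m → Fin q), 3 ≤ m ∧ Even m ∧
        Function.Injective v ∧
        ∀ t : Fin m, v t ≠ v (cyclicNext t) ∧
          (F (v t) ∩ F (v (cyclicNext t))).Nonempty) :
    IsLinearType K F :=
  stmt17_general F hnoevencycle
end
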